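/- Let λ ∈ ℂ, a, N ∈ ℕ, m ∈ ℤ with m ≥ N, and let g_k ∈ ℂ[t] for k = m−N,…,m+N. Set f_j := g_{m−j} for j = −N,…,N. Then R_k¹(g) = 0 and R_k²(g) = 0 for all k = m−N,…,m+N if and only if L_j^{A,+}(f) = L_j^{A,−}(f) = 0 for all j = 0,…,N and L_j^{B,+}(f) = L_j^{B,−}(f) = 0 for all j = 1,…,N. -/
import Mathlib


noncomputable section

/-- The imaginary Gegenbauer operator `S_ℓ^μ` on `ℂ[t]`. -/
def Sop (μ : ℂ) (l : ℤ) (f : Polynomial ℂ) : Polynomial ℂ :=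
  -((1 + Polynomial.X ^ 2) * f.derivative.derivative)
    - Polynomial.C (1 + 2 * μ) * (Polynomial.X * f.derivative)
    + Polynomial.C ((l : ℂ) * ((l : ℂ) + 2 * μ)) * f

/-- The polynomial `L_j^{A,+}(f)`. -/
def LAplus (lam : ℂ) (a : ℤ) (N : ℕ) (m : ℤ) (f : ℤ → Polynomial ℂ) (j : ℤ) :
    Polynomial ℂ :=
  Sop (lam + (j : ℂ) - 1) (a + m - j) (f j)
    - Polynomial.C (2 * ((N : ℂ) - (j : ℂ))) * (f (j + 1)).derivative

/-- The polynomial `L_j^{A,-}(f)`. -/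
def LAminus (lam : ℂ) (a : ℤ) (N : ℕ) (m : ℤ) (f : ℤ → Polynomial ℂ) (j : ℤ) :
    Polynomial ℂ :=
  Sop (lam + (j : ℂ) - 1) (a - m - j) (f (-j))
    + Polynomial.C (2 * ((N : ℂ) - (j : ℂ))) * (f (-j - 1)).derivative

/-- The polynomial `L_j^{B,+}(f)`. -/
def LBplus (lam : ℂ) (a : ℤ) (N : ℕ) (m : ℤ) (f : ℤ → Polynomial ℂ) (j : ℤ) :
    Polynomial ℂ :=
  Polynomial.C (2 * (-(m : ℂ) * (lam + (a : ℂ) - 1))) * f j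
    + Polynomial.C (2 * (j : ℂ)) *
        (Polynomial.C (lam - 1) * f j + Polynomial.X * (f j).derivative)
    + Polynomial.C ((N : ℂ) - (j : ℂ)) * (f (j + 1)).derivative
    + Polynomial.C ((N : ℂ) + (j : ℂ)) * (f (j - 1)).derivative

/-- The polynomial `L_j^{B,-}(f)`. -/
def LBminus (lam : ℂ) (a : ℤ) (N : ℕ) (m : ℤ) (f : ℤ → Polynomial ℂ) (j : ℤ) :
    Polynomial ℂ :=
  Polynomial.C (2 * ((m : ℂ) * (lam + (a : ℂ) - 1))) * f (-j)
    + Polynomial.C (2 * (j : ℂ)) *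
        (Polynomial.C (lam - 1) * f (-j) + Polynomial.X * (f (-j)).derivative)
    - Polynomial.C ((N : ℂ) + (j : ℂ)) * (f (-j + 1)).derivative
    - Polynomial.C ((N : ℂ) - (j : ℂ)) * (f (-j - 1)).derivative

/-- The polynomial `R_k¹(g)`. -/
def R1 (lam : ℂ) (a : ℤ) (N : ℕ) (m : ℤ) (g : ℤ → Polynomial ℂ) (k : ℤ) :
    Polynomial ℂ :=
  Sop (lam - 1) (a - k) (g k)
    - Polynomial.C (2 * ((m : ℂ) - (k : ℂ))) *
        (Polynomial.C ((a : ℂ) - (k : ℂ)) * g k - Polynomial.X * (g k).derivative)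
    + Polynomial.C (2 * ((N : ℂ) - (k : ℂ) + (m : ℂ))) * (g (k + 1)).derivative

/-- The polynomial `R_k²(g)`. -/
def R2 (lam : ℂ) (a : ℤ) (N : ℕ) (m : ℤ) (g : ℤ → Polynomial ℂ) (k : ℤ) :
    Polynomial ℂ :=
  Sop (lam - 1) (a - k) (g k)
    + Polynomial.C (2 * (k : ℂ) * (lam + (a : ℂ) - 1 + (m : ℂ) - (k : ℂ))) * g k
    - Polynomial.C ((N : ℂ) + (k : ℂ) - (m : ℂ)) * (g (k - 1)).derivative
    + Polynomial.C ((N : ℂ) - (k : ℂ) + (m : ℂ)) * (g (k + 1)).derivative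

lemma id1 (lam : ℂ) (a : ℤ) (N : ℕ) (m j : ℤ) (f g : ℤ → Polynomial ℂ)
    (h0 : f j = g (m - j)) (h1 : f (j + 1) = g (m - j - 1)) (h2 : f (j - 1) = g (m - j + 1)) :
    R1 lam a N m g (m - j)
      = LAplus lam a N m f j + 2 * LBplus lam a N m f j := by
  simp only [R1, LAplus, LBplus, Sop, h0, h1, h2]
  push_cast
  simp only [map_add, map_sub, map_mul, map_neg, map_one, map_ofNat]
  ring

lemma id2 (lam : ℂ) (a : ℤ) (N : ℕ) (m j : ℤ) (f g : ℤ → Polynomial ℂ)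
    (h0 : f j = g (m - j)) (h1 : f (j + 1) = g (m - j - 1)) (h2 : f (j - 1) = g (m - j + 1)) :
    R2 lam a N m g (m - j)
      = LAplus lam a N m f j + LBplus lam a N m f j := by
  simp only [R2, LAplus, LBplus, Sop, h0, h1, h2]
  push_cast
  simp only [map_add, map_sub, map_mul, map_neg, map_one, map_ofNat]
  ring

lemma id3 (lam : ℂ) (a : ℤ) (N : ℕ) (m j : ℤ) (f g : ℤ → Polynomial ℂ)
    (h0 : f (-j) = g (m + j)) (h1 : f (-j - 1) = g (m + j + 1)) :
    R1 lam a N m g (m + j) = LAminus lam a N m f j := by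
  simp only [R1, LAminus, Sop, h0, h1]
  push_cast
  simp only [map_add, map_sub, map_mul, map_neg, map_one, map_ofNat]
  ring

lemma id4 (lam : ℂ) (a : ℤ) (N : ℕ) (m j : ℤ) (f g : ℤ → Polynomial ℂ)
    (h0 : f (-j) = g (m + j)) (h1 : f (-j - 1) = g (m + j + 1)) (h2 : f (-j + 1) = g (m + j - 1)) :
    R2 lam a N m g (m + j)
      = LAminus lam a N m f j + LBminus lam a N m f j := by
  simp only [R2, LAminus, LBminus, Sop, h0, h1, h2]
  push_cast
  simp only [map_add, map_sub, map_mul, map_neg, map_one, map_ofNat]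
  ring

/-- `R_k¹(g) = R_k²(g) = 0` for all `k = m-N,…,m+N` iff all
`L_j^{A,±}(f)` and `L_j^{B,±}(f)` vanish, where `f_j := g_{m-j}`. -/
theorem statement6 (lam : ℂ) (a N : ℕ) (m : ℤ) (hm : (N : ℤ) ≤ m)
    (g : ℤ → Polynomial ℂ) (hg0 : g (m - N - 1) = 0) (hg1 : g (m + N + 1) = 0)
    (f : ℤ → Polynomial ℂ) (hf : ∀ j : ℤ, f j = g (m - j)) :
    (∀ k : ℤ, m - N ≤ k → k ≤ m + N →
        R1 lam (a : ℤ) N m g k = 0 ∧ R2 lam (a : ℤ) N m g k = 0) ↔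
      ((∀ j : ℕ, j ≤ N →
          LAplus lam (a : ℤ) N m f (j : ℤ) = 0 ∧ LAminus lam (a : ℤ) N m f (j : ℤ) = 0) ∧
       (∀ j : ℕ, 1 ≤ j → j ≤ N →
          LBplus lam (a : ℤ) N m f (j : ℤ) = 0 ∧ LBminus lam (a : ℤ) N m f (j : ℤ) = 0)) := by
  have hfg : ∀ i l : ℤ, i + l = m → f i = g l := by
    intro i l h
    rw [hf]
    congr 1
    omega
  constructor
  · intro hR
    have key : ∀ j : ℤ, 0 ≤ j → j ≤ N →
        (LAplus lam (a : ℤ) N m f j = 0 ∧ LAminus lam (a : ℤ) N m f j = 0) ∧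
        (LBplus lam (a : ℤ) N m f j = 0 ∧ LBminus lam (a : ℤ) N m f j = 0) := by
      intro j hj0 hjN
      obtain ⟨hR1m, hR2m⟩ := hR (m - j) (by omega) (by omega)
      obtain ⟨hR1p, hR2p⟩ := hR (m + j) (by omega) (by omega)
      have e1 := id1 lam a N m j f g (hfg _ _ (by ring)) (hfg _ _ (by ring)) (hfg _ _ (by ring))
      have e2 := id2 lam a N m j f g (hfg _ _ (by ring)) (hfg _ _ (by ring)) (hfg _ _ (by ring))
      have e3 := id3 lam a N m j f g (hfg _ _ (by ring)) (hfg _ _ (by ring))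
      have e4 := id4 lam a N m j f g (hfg _ _ (by ring)) (hfg _ _ (by ring)) (hfg _ _ (by ring))
      rw [hR1m] at e1
      rw [hR2m] at e2
      rw [hR1p] at e3
      rw [hR2p] at e4
      refine ⟨⟨by linear_combination e1 - 2 * e2, e3.symm⟩,
        ⟨by linear_combination e2 - e1, by linear_combination e3 - e4⟩⟩
    constructor
    · intro j hj
      exact (key j (by positivity) (by exact_mod_cast hj)).1
    · intro j _ hj
      exact (key j (by positivity) (by exact_mod_cast hj)).2
  · rintro ⟨hA, hB⟩ k hk1 hk2
    rcases lt_trichotomy k m with hkm | hkm | hkm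
    · -- k < m : j = m - k ∈ [1, N]
      obtain ⟨j, hj⟩ : ∃ j : ℕ, (j : ℤ) = m - k := ⟨(m - k).toNat, by omega⟩
      have hj1 : 1 ≤ j := by omega
      have hjN : j ≤ N := by omega
      have e1 := id1 lam a N m j f g (hfg _ _ (by omega)) (hfg _ _ (by omega)) (hfg _ _ (by omega))
      have e2 := id2 lam a N m j f g (hfg _ _ (by omega)) (hfg _ _ (by omega)) (hfg _ _ (by omega))
      rw [show m - (j : ℤ) = k by omega] at e1 e2
      rw [(hA j hjN).1, (hB j hj1 hjN).1] at e1 e2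
      constructor
      · rw [e1]; ring
      · rw [e2]; ring
    · -- k = m : j = 0
      subst hkm
      have e1 := id1 lam a N k 0 f g (hfg _ _ (by omega)) (hfg _ _ (by omega)) (hfg _ _ (by omega))
      have e2 := id2 lam a N k 0 f g (hfg _ _ (by omega)) (hfg _ _ (by omega)) (hfg _ _ (by omega))
      have e3 := id3 lam a N k 0 f g (hfg _ _ (by omega)) (hfg _ _ (by omega))
      rw [show k + (0:ℤ) = k by ring] at e3
      rw [show k - (0:ℤ) = k by ring] at e1 e2
      have hA0 := hA 0 (Nat.zero_le N)
      have hR1 : R1 lam (a : ℤ) N k g k = 0 := by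
        rw [e3]; exact_mod_cast hA0.2
      refine ⟨hR1, ?_⟩
      have h2 : (2 : Polynomial ℂ) * R2 lam (a : ℤ) N k g k = 0 := by
        have hAp : LAplus lam (a : ℤ) N k f 0 = 0 := by exact_mod_cast hA0.1
        rw [hAp] at e1 e2
        linear_combination 2 * e2 - e1 + hR1
      rcases mul_eq_zero.mp h2 with h | h
      · exact absurd h (by norm_num)
      · exact h
    · -- k > m : j = k - m ∈ [1, N]
      obtain ⟨j, hj⟩ : ∃ j : ℕ, (j : ℤ) = k - m := ⟨(k - m).toNat, by omega⟩
      have hj1 : 1 ≤ j := by omega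
      have hjN : j ≤ N := by omega
      have e3 := id3 lam a N m j f g (hfg _ _ (by omega)) (hfg _ _ (by omega))
      have e4 := id4 lam a N m j f g (hfg _ _ (by omega)) (hfg _ _ (by omega)) (hfg _ _ (by omega))
      rw [show m + (j : ℤ) = k by omega] at e3 e4
      rw [(hA j hjN).2] at e3 e4
      rw [(hB j hj1 hjN).2] at e4
      constructor
      · rw [e3]
      · rw [e4]; ring

end
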